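/- arXiv:1810.00688 — 2 statements merged into one kernel-verified Lean document; each statement's English description precedes it below -/
import Mathlib

section
/- Let E_T > 0, 0 < ν < 1/2, p ≥ 1, and let a ∈ ℝ³ be a unit vector with M = a⊗a. Set D = (1 + ν)(p(1 − ν) − 2ν²), μ = E_T/(2(1 + ν)), λ = E_T·ν(ν + p)/D, α = E_T·ν²(p − 1)/D, β = E_T·(p²(1 − ν²) − p(1 + 2ν²) + 3ν²)/D, and define σ(ε) = λ(tr ε)I + 2μ ε + β⟨M, ε⟩M + α(⟨M, ε⟩I + (tr ε)M) for 3×3 matrices ε, where ⟨M, ε⟩ = tr(Mᵀε). Then for every nonzero symmetric 3×3 real matrix ε one has ⟨σ(ε), ε⟩ > 0; that is, the transversely isotropic elasticity tensor is pointwise stable. -/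
open Matrix

/-- Pointwise stability of the transversely isotropic elasticity tensor: under the
conditions `E_T > 0`, `0 < ν < 1/2`, `p ≥ 1`, for every nonzero symmetric strain
`ε` one has `⟨σ(ε), ε⟩ > 0`. -/
theorem elasticity_tensor_pointwise_stable (E_T ν p : ℝ) (a : Fin 3 → ℝ)
    (hE : 0 < E_T) (hν0 : 0 < ν) (hν : ν < 1/2) (hp : 1 ≤ p)
    (ha : a ⬝ᵥ a = 1) :
    let M : Matrix (Fin 3) (Fin 3) ℝ := Matrix.vecMulVec a a
    let frob : Matrix (Fin 3) (Fin 3) ℝ → Matrix (Fin 3) (Fin 3) ℝ → ℝ :=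
      fun A B => (Aᵀ * B).trace
    let D : ℝ := (1 + ν) * (p * (1 - ν) - 2 * ν ^ 2)
    let μ : ℝ := E_T / (2 * (1 + ν))
    let lam : ℝ := E_T * (ν * (ν + p)) / D
    let α : ℝ := E_T * (ν ^ 2 * (p - 1)) / D
    let β : ℝ := E_T * (p ^ 2 * (1 - ν ^ 2) - p * (1 + 2 * ν ^ 2) + 3 * ν ^ 2) / D
    let σ : Matrix (Fin 3) (Fin 3) ℝ → Matrix (Fin 3) (Fin 3) ℝ := fun ε =>
      (lam * ε.trace) • (1 : Matrix (Fin 3) (Fin 3) ℝ) + (2 * μ) • ε +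
        (β * frob M ε) • M +
        α • ((frob M ε) • (1 : Matrix (Fin 3) (Fin 3) ℝ) + ε.trace • M)
    ∀ ε : Matrix (Fin 3) (Fin 3) ℝ, ε.IsSymm → ε ≠ 0 →
      0 < frob (σ ε) ε := by
  intro M frob D μ lam α β σ ε hsym hne
  have hν1 : (0:ℝ) < 1 + ν := by linarith
  have hν2 : (0:ℝ) < 1 - 2*ν := by linarith
  have hp0 : (0:ℝ) < p := by linarith
  have h2 : (0:ℝ) < p*(1-ν) - 2*ν^2 := by
    nlinarith [mul_le_mul_of_nonneg_right hp (show (0:ℝ) ≤ 1-ν by linarith), mul_pos hν2 hν1]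
  have hD : 0 < D := mul_pos hν1 h2
  have hμ : 0 < μ := by simp only [μ]; positivity
  have hlam : 0 < lam := by
    simp only [lam]
    exact div_pos (mul_pos hE (mul_pos hν0 (by linarith))) hD
  have hA : (0:ℝ) ≤ p*(1-ν^2) - 3*ν^2 := by
    nlinarith [mul_le_mul_of_nonneg_right hp (show (0:ℝ) ≤ 1-ν^2 by nlinarith),
      mul_pos hν2 (show (0:ℝ) < 1+2*ν by linarith)]
  have hβ : 0 ≤ β := by
    simp only [β]
    exact div_nonneg (mul_nonneg hE.le (by nlinarith [mul_nonneg (sub_nonneg.2 hp) hA])) hD.le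
  have hG : (0:ℝ) ≤ (ν+p)*(p*(1-ν^2)-3*ν^2) - ν^3*(p-1) := by
    nlinarith [mul_nonneg (sq_nonneg p) (mul_pos hν2 (show (0:ℝ) < 1+2*ν by linarith)).le,
      mul_nonneg hp0.le (mul_nonneg hν2.le (show (0:ℝ) ≤ 2*ν^2+4*ν+1 by positivity)),
      mul_nonneg hν2.le (show (0:ℝ) ≤ 1+2*ν+4*ν^2 by positivity),
      mul_nonneg hp0.le (sub_nonneg.2 hp), sub_nonneg.2 hp]
  have hnum : (E_T*(ν^2*(p-1)))^2 ≤ (E_T*(ν*(ν+p))) * (E_T*(p^2*(1-ν^2)-p*(1+2*ν^2)+3*ν^2)) := by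
    nlinarith [mul_nonneg (mul_nonneg (mul_nonneg (sq_nonneg E_T) hν0.le) (sub_nonneg.2 hp)) hG]
  have hα2 : α^2 ≤ lam * β := by
    simp only [α, lam, β]
    rw [div_pow, div_mul_div_comm, show D*D = D^2 by ring]
    exact (div_le_div_iff_of_pos_right (pow_pos hD 2)).mpr hnum
  set t := ε.trace with ht
  set m := frob M ε with hm
  set s := frob ε ε with hsdef
  have key : frob (σ ε) ε = lam*t^2 + 2*μ*s + β*m^2 + 2*α*(t*m) := by
    simp only [σ, frob, Matrix.transpose_add, Matrix.transpose_smul, Matrix.add_mul,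
      Matrix.smul_mul, Matrix.trace_add, Matrix.trace_smul, Matrix.transpose_one,
      Matrix.one_mul, smul_eq_mul, hm, ht, hsdef]
    ring
  obtain ⟨i, j, hij⟩ : ∃ i j, ε i j ≠ 0 := by
    by_contra h; push_neg at h
    exact hne (by ext i j; simp [h])
  have hs : 0 < s := by
    have hrep : s = ∑ k, ∑ i, ε i k * ε i k := by
      simp [hsdef, frob, Matrix.trace, Matrix.mul_apply, Matrix.diag, Matrix.transpose_apply]
    rw [hrep]
    apply Finset.sum_pos' (fun k _ => Finset.sum_nonneg fun i _ => mul_self_nonneg _)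
    exact ⟨j, Finset.mem_univ j, Finset.sum_pos' (fun i _ => mul_self_nonneg _)
      ⟨i, Finset.mem_univ i, mul_self_pos.2 hij⟩⟩
  rw [key]
  nlinarith [sq_nonneg (lam*t + α*m), mul_pos hlam (mul_pos hμ hs),
    mul_nonneg (sub_nonneg.2 hα2) (sq_nonneg m), hlam, mul_pos hμ hs]
end

section
/- Let E_T > 0, 0 < ν < 1/2, p ≥ 1, and let a ∈ ℝ³ be a unit vector with M = a⊗a. With D, μ, λ, α, β and σ(ε) defined as follows: D = (1 + ν)(p(1 − ν) − 2ν²), μ = E_T/(2(1 + ν)), λ = E_T·ν(ν + p)/D, α = E_T·ν²(p − 1)/D, β = E_T·(p²(1 − ν²) − p(1 + 2ν²) + 3ν²)/D, σ(ε) = λ(tr ε)I + 2μ ε + β⟨M, ε⟩M + α(⟨M, ε⟩I + (tr ε)M), there exists a constant c > 0 such that ⟨σ(ε), ε⟩ ≥ c‖ε‖² for every symmetric 3×3 real matrix ε, where ‖·‖ is the Frobenius norm. -/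
open Matrix

lemma disc_nonneg' (ν p : ℝ) (hν0 : 0 < ν) (hν : ν < 1/2) (hp : 1 ≤ p) :
    ν^4*(p-1)^2 ≤ (ν*(ν+p)) * (p^2*(1-ν^2)-p*(1+2*ν^2)+3*ν^2) := by
  nlinarith [mul_nonneg (sub_nonneg.2 hp) (mul_pos (mul_pos hν0 (by linarith : (0:ℝ) < 1+ν)) (by nlinarith : (0:ℝ) < 1 - 4*ν^2)).le,
    mul_nonneg (mul_nonneg (sub_nonneg.2 hp) (sub_nonneg.2 hp)) (mul_pos hν0 (by nlinarith : (0:ℝ) < 2+ν-5*ν^2-2*ν^3)).le,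
    mul_nonneg (mul_nonneg (mul_nonneg (sub_nonneg.2 hp) (sub_nonneg.2 hp)) (sub_nonneg.2 hp)) (mul_pos hν0 (by nlinarith : (0:ℝ) < 1-ν^2)).le]

lemma quad_nonneg' (ν p t m : ℝ) (hν0 : 0 < ν) (hν : ν < 1/2) (hp : 1 ≤ p) :
    0 ≤ (ν*(ν+p))*t^2 + 2*(ν^2*(p-1))*m*t + (p^2*(1-ν^2)-p*(1+2*ν^2)+3*ν^2)*m^2 := by
  have hl : 0 < ν*(ν+p) := by nlinarith
  have hd := disc_nonneg' ν p hν0 hν hp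
  nlinarith [sq_nonneg (ν*(ν+p)*t + ν^2*(p-1)*m), mul_nonneg (sub_nonneg.2 hd) (sq_nonneg m)]

/-- Uniform coercivity of the transversely isotropic elasticity tensor: under the
conditions `E_T > 0`, `0 < ν < 1/2`, `p ≥ 1`, there is a constant `c > 0` with
`⟨σ(ε), ε⟩ ≥ c‖ε‖²` (squared Frobenius norm) for all symmetric strains `ε`. -/
theorem elasticity_tensor_coercive (E_T ν p : ℝ) (a : Fin 3 → ℝ)
    (hE : 0 < E_T) (hν0 : 0 < ν) (hν : ν < 1/2) (hp : 1 ≤ p)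
    (ha : a ⬝ᵥ a = 1) :
    let M : Matrix (Fin 3) (Fin 3) ℝ := Matrix.vecMulVec a a
    let frob : Matrix (Fin 3) (Fin 3) ℝ → Matrix (Fin 3) (Fin 3) ℝ → ℝ :=
      fun A B => (Aᵀ * B).trace
    let D : ℝ := (1 + ν) * (p * (1 - ν) - 2 * ν ^ 2)
    let μ : ℝ := E_T / (2 * (1 + ν))
    let lam : ℝ := E_T * (ν * (ν + p)) / D
    let α : ℝ := E_T * (ν ^ 2 * (p - 1)) / D
    let β : ℝ := E_T * (p ^ 2 * (1 - ν ^ 2) - p * (1 + 2 * ν ^ 2) + 3 * ν ^ 2) / D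
    let σ : Matrix (Fin 3) (Fin 3) ℝ → Matrix (Fin 3) (Fin 3) ℝ := fun ε =>
      (lam * ε.trace) • (1 : Matrix (Fin 3) (Fin 3) ℝ) + (2 * μ) • ε +
        (β * frob M ε) • M +
        α • ((frob M ε) • (1 : Matrix (Fin 3) (Fin 3) ℝ) + ε.trace • M)
    ∃ c : ℝ, 0 < c ∧ ∀ ε : Matrix (Fin 3) (Fin 3) ℝ, ε.IsSymm →
      c * frob ε ε ≤ frob (σ ε) ε := by
  intro M frob D μ lam α β σ
  have hD : 0 < D := by
    have : (0:ℝ) < p * (1 - ν) - 2 * ν ^ 2 := by nlinarith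
    have : (0:ℝ) < 1 + ν := by linarith
    exact mul_pos this ‹_›
  have hED : 0 < E_T / D := div_pos hE hD
  have hμ : 0 < 2 * μ := by
    show 0 < 2 * (E_T / (2 * (1 + ν)))
    positivity
  refine ⟨2 * μ, hμ, fun ε hε => ?_⟩
  have hMs : Mᵀ = M := by
    ext i j; simp [M, vecMulVec_apply, transpose_apply, mul_comm]
  set t : ℝ := ε.trace with ht
  set m : ℝ := frob M ε with hm
  have expand : frob (σ ε) ε
      = lam * t * t + 2*μ * frob ε ε + β * m * (m) + α * (m * t + t * m) := by
    show (((lam * t) • (1 : Matrix (Fin 3) (Fin 3) ℝ) + (2 * μ) • ε +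
        (β * m) • M + α • (m • (1 : Matrix (Fin 3) (Fin 3) ℝ) + t • M))ᵀ * ε).trace = _
    simp only [transpose_add, transpose_smul, transpose_one, hMs, hε.eq,
      Matrix.add_mul, Matrix.smul_mul, Matrix.one_mul, trace_add, trace_smul]
    have h1 : (Mᵀ * ε).trace = m := hm
    rw [hMs] at h1
    have h2 : (εᵀ * ε).trace = frob ε ε := rfl
    rw [hε.eq] at h2
    rw [h1, h2]
    simp only [smul_eq_mul, ht]
    try ring
  rw [expand]
  have key : 0 ≤ lam * t * t + β * m * m + α * (m * t + t * m) := by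
    have hq := quad_nonneg' ν p t m hν0 hν hp
    have : lam * t * t + β * m * m + α * (m * t + t * m)
        = (E_T / D) * ((ν*(ν+p))*t^2 + 2*(ν^2*(p-1))*m*t
            + (p^2*(1-ν^2)-p*(1+2*ν^2)+3*ν^2)*m^2) := by
      show E_T * (ν * (ν + p)) / D * t * t
          + E_T * (p ^ 2 * (1 - ν ^ 2) - p * (1 + 2 * ν ^ 2) + 3 * ν ^ 2) / D * m * m
          + E_T * (ν ^ 2 * (p - 1)) / D * (m * t + t * m) = _
      field_simp
      ring
    rw [this]
    exact mul_nonneg hED.le hq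
  linarith
end
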